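/- arXiv:1610.04663 — 3 statements merged into one kernel-verified Lean document; each statement's English description precedes it below -/
import Mathlib

section
/- (Uniqueness of the right-hand side modulo polynomials.) Let n ≥ 1, s ∈ (0,1), k ∈ ℕ, and let u : ℝⁿ → ℝ be measurable, continuous on B_1, with ∫_{ℝⁿ} |u(y)|/(1+|y|^{n+2s+k}) dy < ∞. Let f, f̃ : B_1 → ℝ and assume (−Δ)^s u ≐ᵏ f pointwise in B_1 and (−Δ)^s u ≐ᵏ f̃ pointwise in B_1. Then there exists a polynomial P of degree at most k−1 such that f(x) − f̃(x) = P(x) for every x ∈ B_1. -/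
open MeasureTheory Metric Set Filter
open scoped ENNReal

noncomputable section

/-- Euclidean space `ℝⁿ`. -/
abbrev En (n : ℕ) := EuclideanSpace ℝ (Fin n)

/-- The principal value fractional Laplacian `(-Δ)ˢ v` exists at `x` and equals `L`:
all the truncated integrals are defined and they converge to `L` as the truncation
parameter tends to `0⁺`. -/
def PVFracLapAt (n : ℕ) (s : ℝ) (v : En n → ℝ) (x : En n) (L : ℝ) : Prop :=
  (∀ ε : ℝ, 0 < ε →
    IntegrableOn (fun y => (v x - v y) / ‖x - y‖ ^ ((n : ℝ) + 2 * s)) {y | ε < ‖x - y‖}) ∧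
  Tendsto (fun ε : ℝ =>
      ∫ y in {y : En n | ε < ‖x - y‖}, (v x - v y) / ‖x - y‖ ^ ((n : ℝ) + 2 * s))
    (nhdsWithin 0 (Ioi 0)) (nhds L)

/-- `P : ℝⁿ → ℝ` is a polynomial function of total degree at most `k - 1`
(with the convention that for `k = 0` it is identically zero). -/
def IsPolyDegLt (n k : ℕ) (P : En n → ℝ) : Prop :=
  ∃ p : MvPolynomial (Fin n) ℝ,
    (∀ m ∈ p.support, (m.sum fun _ e => e) < k) ∧
    ∀ x : En n, P x = MvPolynomial.eval (fun i => x i) p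

/-- `(-Δ)ˢ u ≐ᵏ f` pointwise in the unit ball `B₁`. -/
def FracLapEqModPoly (n : ℕ) (s : ℝ) (k : ℕ) (u f : En n → ℝ) : Prop :=
  ∃ F P : ℝ → En n → ℝ,
    (∀ R : ℝ, 1 ≤ R →
      ContinuousOn (F R) (ball (0 : En n) 1) ∧ IsPolyDegLt n k (P R) ∧
      ∀ x ∈ ball (0 : En n) 1,
        PVFracLapAt n s ((ball (0 : En n) R).indicator u) x (F R x + P R x)) ∧
    ∀ x ∈ ball (0 : En n) 1, Tendsto (fun R => F R x) atTop (nhds (f x))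

/-- The tail quantity `J_{u,j} = ∫_{B_{1/2}ᶜ} |u(y)| / |y|^{n+2s+j} dy`, valued in `[0,∞]`. -/
def Jtail (n : ℕ) (s : ℝ) (j : ℕ) (u : En n → ℝ) : ℝ≥0∞ :=
  ∫⁻ y in (ball (0 : En n) (1 / 2))ᶜ,
    ENNReal.ofReal (|u y| / ‖y‖ ^ ((n : ℝ) + 2 * s + (j : ℝ)))

/-- The Hölder seminorm `[f]_{C^γ(Ω)}`, valued in `[0,∞]`. -/
def holderSemi (n : ℕ) (γ : ℝ) (Ω : Set (En n)) (f : En n → ℝ) : ℝ≥0∞ :=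
  ⨆ (x ∈ Ω) (y ∈ Ω) (_ : x ≠ y),
    ENNReal.ofReal
      (‖iteratedFDerivWithin ℝ ⌊γ⌋₊ f Ω x - iteratedFDerivWithin ℝ ⌊γ⌋₊ f Ω y‖ /
        ‖x - y‖ ^ (γ - (⌊γ⌋₊ : ℝ)))

/-- The norm `‖f‖_{C^m(Ω)}`, valued in `[0,∞]`. -/
def cNorm (n : ℕ) (m : ℕ) (Ω : Set (En n)) (f : En n → ℝ) : ℝ≥0∞ :=
  ∑ j ∈ Finset.range (m + 1),
    ⨆ x ∈ Ω, ENNReal.ofReal ‖iteratedFDerivWithin ℝ j f Ω x‖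

/-- The norm `‖f‖_{C^γ(Ω)} = ‖f‖_{C^{⌊γ⌋}(Ω)} + [f]_{C^γ(Ω)}`, valued in `[0,∞]`. -/
def cHolderNorm (n : ℕ) (γ : ℝ) (Ω : Set (En n)) (f : En n → ℝ) : ℝ≥0∞ :=
  cNorm n ⌊γ⌋₊ Ω f + holderSemi n γ Ω f

/-- The seminorm `[f]_{C^γ(Ω;k)}`: the infimum of `[f - P]_{C^γ(Ω)}` over all
polynomials `P` of degree at most `k - 1`. -/
def holderSemiMod (n : ℕ) (γ : ℝ) (Ω : Set (En n)) (k : ℕ) (f : En n → ℝ) : ℝ≥0∞ :=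
  ⨅ (P : En n → ℝ) (_ : IsPolyDegLt n k P), holderSemi n γ Ω (fun x => f x - P x)

/-- Evaluation of a multivariate polynomial on the unit ball, as a linear map. -/
def evalBallLM (n : ℕ) :
    MvPolynomial (Fin n) ℝ →ₗ[ℝ] ((ball (0 : En n) 1 : Set (En n)) → ℝ) where
  toFun p := fun x => MvPolynomial.eval (fun i => (x : En n) i) p
  map_add' p q := by funext x; simp
  map_smul' c p := by funext x; simp [MvPolynomial.smul_eval]

/-- The polynomials of degree `< k` form a finite-dimensional submodule. -/
lemma exists_degLt_submodule (n k : ℕ) :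
    ∃ V : Submodule ℝ (MvPolynomial (Fin n) ℝ), Module.Finite ℝ V ∧
      ∀ p : MvPolynomial (Fin n) ℝ,
        (p ∈ V ↔ ∀ m ∈ p.support, (m.sum fun _ e => e) < k) := by
  cases k with
  | zero =>
      refine ⟨⊥, inferInstance, fun p => ?_⟩
      simp only [Submodule.mem_bot]
      constructor
      · rintro rfl m hm; simp at hm
      · intro h
        rw [← MvPolynomial.support_eq_empty, Finset.eq_empty_iff_forall_notMem]
        intro m hm; exact absurd (h m hm) (Nat.not_lt_zero _)
  | succ j =>
      refine ⟨MvPolynomial.restrictTotalDegree (Fin n) ℝ j, inferInstance, fun p => ?_⟩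
      rw [MvPolynomial.mem_restrictTotalDegree, MvPolynomial.totalDegree,
        Finset.sup_le_iff]
      exact ⟨fun h m hm => Nat.lt_succ_of_le (h m hm),
        fun h m hm => Nat.lt_succ_iff.mp (h m hm)⟩

/-- Uniqueness of the right-hand side modulo polynomials. -/
theorem rhs_unique_mod_poly
    (n : ℕ) (hn : 1 ≤ n) (s : ℝ) (hs : s ∈ Ioo (0 : ℝ) 1) (k : ℕ)
    (u : En n → ℝ) (humeas : Measurable u)
    (hucont : ContinuousOn u (ball (0 : En n) 1))
    (hint : ∫⁻ y : En n,
        ENNReal.ofReal (|u y| / (1 + ‖y‖ ^ ((n : ℝ) + 2 * s + (k : ℝ)))) < ⊤)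
    (f ftilde : En n → ℝ)
    (hf : FracLapEqModPoly n s k u f)
    (hftilde : FracLapEqModPoly n s k u ftilde) :
    ∃ P : En n → ℝ, IsPolyDegLt n k P ∧
      ∀ x ∈ ball (0 : En n) 1, f x - ftilde x = P x := by
  classical
  obtain ⟨F, P, hFP, hFlim⟩ := hf
  obtain ⟨G, Q, hGQ, hGlim⟩ := hftilde
  obtain ⟨V, hVfin, hVmem⟩ := exists_degLt_submodule n k
  haveI : Module.Finite ℝ V := hVfin
  -- For each `R ≥ 1` and `x ∈ B₁`, uniqueness of the principal value gives
  -- `F R x + P R x = G R x + Q R x`.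
  have key : ∀ R : ℝ, 1 ≤ R → ∀ x ∈ ball (0 : En n) 1,
      F R x + P R x = G R x + Q R x := by
    intro R hR x hx
    exact tendsto_nhds_unique ((hFP R hR).2.2 x hx).2 ((hGQ R hR).2.2 x hx).2
  -- The image of `V` under evaluation on the ball.
  set W : Submodule ℝ ((ball (0 : En n) 1 : Set (En n)) → ℝ) :=
    V.map (evalBallLM n) with hW
  haveI : Module.Finite ℝ W := Module.Finite.map V (evalBallLM n)
  have hWclosed : IsClosed (W : Set ((ball (0 : En n) 1 : Set (En n)) → ℝ)) :=
    Submodule.closed_of_finiteDimensional W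
  -- The candidate difference polynomial at each scale `R`.
  have hpoly : ∀ R : ℝ, 1 ≤ R →
      (fun x : (ball (0 : En n) 1 : Set (En n)) => Q R x - P R x) ∈ W := by
    intro R hR
    obtain ⟨p, hp, hpev⟩ := (hFP R hR).2.1
    obtain ⟨q, hq, hqev⟩ := (hGQ R hR).2.1
    refine ⟨q - p, (hVmem (q - p)).2 ?_, ?_⟩
    · intro m hm
      have := MvPolynomial.support_sub (Fin n) q p hm
      rcases Finset.mem_union.mp this with h | h
      · exact hq m h
      · exact hp m h
    · funext x
      simp [evalBallLM, hpev, hqev]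
  -- The pointwise limit of these functions is `f - ftilde` on the ball.
  have hlim : Tendsto
      (fun R : ℝ => fun x : (ball (0 : En n) 1 : Set (En n)) => Q R x - P R x)
      atTop (nhds (fun x : (ball (0 : En n) 1 : Set (En n)) => f x - ftilde x)) := by
    rw [tendsto_pi_nhds]
    intro x
    have h1 : Tendsto (fun R : ℝ => F R (x : En n) - G R (x : En n)) atTop
        (nhds (f x - ftilde x)) := (hFlim x x.2).sub (hGlim x x.2)
    refine h1.congr' ?_
    filter_upwards [eventually_ge_atTop (1 : ℝ)] with R hR
    have := key R hR x x.2
    linarith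
  have hmem : (fun x : (ball (0 : En n) 1 : Set (En n)) => f x - ftilde x) ∈ W :=
    hWclosed.mem_of_tendsto hlim
      (by filter_upwards [eventually_ge_atTop (1 : ℝ)] with R hR using hpoly R hR)
  obtain ⟨p, hpV, hpev⟩ := hmem
  refine ⟨fun x => MvPolynomial.eval (fun i => x i) p,
    ⟨p, (hVmem p).1 hpV, fun x => rfl⟩, ?_⟩
  intro x hx
  have := congrFun hpev ⟨x, hx⟩
  simpa [evalBallLM] using this.symm
end
end

section
/- (Weak-norm Cauchy sequences of polynomials converge uniformly.) Let n ≥ 1, d ∈ ℕ, let U ⊆ ℝⁿ be a nonempty bounded open set, and for a polynomial function P on ℝⁿ define ‖P‖_⋆ := sup { ∫_U P(x) φ(x) dx : φ ∈ C²(ℝⁿ), φ has compact support contained in U, and ‖φ‖_{C²(ℝⁿ)} ≤ 1 }. Let (P⁽ʲ⁾)_{j∈ℕ} be a sequence of polynomial functions of total degree at most d−1 which is a Cauchy sequence with respect to ‖·‖_⋆, i.e. for every η > 0 there is N with ‖P⁽ʲ⁾ − P⁽ʲ'⁾‖_⋆ ≤ η for all j, j' ≥ N. Then there exists a polynomial function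 P of total degree at most d−1 such that sup_{x ∈ U} |P⁽ʲ⁾(x) − P(x)| → 0 as j → ∞. -/
open MeasureTheory Metric Set Filter
open scoped ENNReal

noncomputable section

/-!
The polynomials of degree `< d` form a finite-dimensional space `V` of continuous functions.
Pairing them with the admissible test functions, `f ↦ (φ ↦ ∫_U f φ)`, is injective on `V`: a
polynomial that integrates to zero against every bump supported in `U` vanishes on `U`, hence
everywhere by analyticity. An injective linear map out of a finite-dimensional space is a closed
embedding, so the weakly Cauchy sequence converges in `V`; and since `V` carries only one Hausdorff
vector topology, it converges uniformly on the compact set `closure U`.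
-/

open Topology CompactlySupported

theorem LinearMap.exists_tendsto_of_cauchySeq_comp {E F : Type*} [AddCommGroup E] [Module ℝ E]
    [TopologicalSpace E] [IsTopologicalAddGroup E] [ContinuousSMul ℝ E] [T2Space E]
    [FiniteDimensional ℝ E] [AddCommGroup F] [Module ℝ F] [UniformSpace F] [IsUniformAddGroup F]
    [ContinuousSMul ℝ F] [T2Space F] [CompleteSpace F] {J : E →ₗ[ℝ] F}
    (hJ : Function.Injective J) {x : ℕ → E} (hx : CauchySeq (J ∘ x)) :
    ∃ y, Tendsto x atTop (𝓝 y) := by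
  have hJe := LinearMap.isClosedEmbedding_of_injective (LinearMap.ker_eq_bot.mpr hJ)
  obtain ⟨ℓ, hℓ⟩ := cauchySeq_tendsto_of_complete hx
  obtain ⟨y, rfl⟩ :=
    hJe.isClosed_range.mem_of_tendsto hℓ (Eventually.of_forall fun j => ⟨x j, rfl⟩)
  exact ⟨y, hJe.tendsto_nhds_iff.mpr hℓ⟩

section TestFunctions

variable {E : Type*} [NormedAddCommGroup E] [NormedSpace ℝ E]

def c2Norm (φ : E → ℝ) : ℝ :=
  (⨆ x, |φ x|) + (⨆ x, ‖fderiv ℝ φ x‖) + (⨆ x, ‖iteratedFDeriv ℝ 2 φ x‖)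

theorem c2Norm_nonneg (φ : E → ℝ) : 0 ≤ c2Norm φ := by
  have h₀ : 0 ≤ ⨆ x, |φ x| := Real.iSup_nonneg fun _ => abs_nonneg _
  have h₁ : 0 ≤ ⨆ x, ‖fderiv ℝ φ x‖ := Real.iSup_nonneg fun _ => norm_nonneg _
  have h₂ : 0 ≤ ⨆ x, ‖iteratedFDeriv ℝ 2 φ x‖ := Real.iSup_nonneg fun _ => norm_nonneg _
  unfold c2Norm
  positivity

theorem c2Norm_const_smul {φ : E → ℝ} (hφ : ContDiff ℝ 2 φ) {c : ℝ} (hc : 0 ≤ c) :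
    c2Norm (c • φ) = c * c2Norm φ := by
  simp only [c2Norm, mul_add, Real.mul_iSup_of_nonneg hc, Pi.smul_apply, smul_eq_mul, abs_mul,
    abs_of_nonneg hc, fderiv_const_smul_field, iteratedFDeriv_const_smul_apply hφ.contDiffAt,
    norm_smul, Real.norm_of_nonneg hc]

/-- The test functions `φ` over which the weak norm `‖·‖_⋆` on `U` takes its supremum. -/
def admissibleTests (U : Set E) : Set C_c(E, ℝ) :=
  {φ | ContDiff ℝ 2 φ ∧ tsupport φ ⊆ U ∧ c2Norm φ ≤ 1}

theorem exists_pos_smul_mem_admissibleTests {U : Set E} {φ : C_c(E, ℝ)} (hφ : ContDiff ℝ 2 φ)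
    (hφU : tsupport φ ⊆ U) : ∃ c > (0 : ℝ), c • φ ∈ admissibleTests U := by
  set c := (1 + c2Norm (φ : E → ℝ))⁻¹
  have hpos : 0 < 1 + c2Norm (φ : E → ℝ) := by linarith [c2Norm_nonneg (φ : E → ℝ)]
  have hc : 0 < c := inv_pos.mpr hpos
  refine ⟨c, hc, hφ.const_smul c, (tsupport_smul_subset_right (fun _ => c) φ).trans hφU, ?_⟩
  rw [CompactlySupportedContinuousMap.coe_smul, c2Norm_const_smul hφ hc.le, inv_mul_le_iff₀ hpos]
  linarith

variable [FiniteDimensional ℝ E] [MeasurableSpace E] [BorelSpace E] (μ : Measure E)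
  [μ.IsOpenPosMeasure] [IsFiniteMeasureOnCompacts μ]

theorem exists_contDiff_tsupport_subset_integral_mul_pos {f : E → ℝ} (hf : Continuous f)
    {U : Set E} (hU : IsOpen U) {x₀ : E} (hx₀ : x₀ ∈ U) (hfx₀ : 0 < f x₀) :
    ∃ ψ : C_c(E, ℝ), ContDiff ℝ 2 ψ ∧ tsupport ψ ⊆ U ∧ 0 < ∫ x in U, f x * ψ x ∂μ := by
  obtain ⟨r, hr, hball⟩ := nhds_basis_closedBall.mem_iff.mp
    ((hU.inter (isOpen_lt continuous_const hf)).mem_nhds ⟨hx₀, hfx₀⟩)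
  let b : ContDiffBump x₀ := ⟨r / 2, r, half_pos hr, half_lt_self hr⟩
  let ψ : C_c(E, ℝ) := ⟨⟨b, b.continuous⟩, b.hasCompactSupport⟩
  have hψU : tsupport ψ ⊆ U := by
    rw [show tsupport ψ = closedBall x₀ r from b.tsupport_eq]
    exact fun y hy => (hball hy).1
  have hnonneg : 0 ≤ fun x => f x * ψ x := by
    intro x
    by_cases hx : x ∈ ball x₀ r
    · exact mul_nonneg (hball (ball_subset_closedBall hx)).2.le b.nonneg
    · simp [ψ, b.zero_of_le_dist (not_lt.mp hx)]
  have hsupport : Function.support (fun x => f x * ψ x) = ball x₀ r := by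
    rw [Function.support_mul, show Function.support ψ = ball x₀ r from b.support_eq]
    exact inter_eq_right.mpr fun x hx => (hball (ball_subset_closedBall hx)).2.ne'
  refine ⟨ψ, b.contDiff, hψU, ?_⟩
  rw [setIntegral_eq_integral_of_forall_compl_eq_zero fun x hx => by
      simp [image_eq_zero_of_notMem_tsupport (fun h => hx (hψU h))],
    integral_pos_iff_support_of_nonneg hnonneg
      ((hf.mul ψ.continuous).integrable_of_hasCompactSupport ψ.hasCompactSupport.mul_left),
    hsupport]
  exact measure_ball_pos μ x₀ hr

theorem exists_mem_admissibleTests_integral_mul_pos {f : E → ℝ} (hf : Continuous f)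
    {U : Set E} (hU : IsOpen U) {x₀ : E} (hx₀ : x₀ ∈ U) (hfx₀ : 0 < f x₀) :
    ∃ φ ∈ admissibleTests U, 0 < ∫ x in U, f x * φ x ∂μ := by
  obtain ⟨ψ, hψ, hψU, hpos⟩ := exists_contDiff_tsupport_subset_integral_mul_pos μ hf hU hx₀ hfx₀
  obtain ⟨c, hc, hcψ⟩ := exists_pos_smul_mem_admissibleTests hψ hψU
  refine ⟨c • ψ, hcψ, ?_⟩
  simp only [CompactlySupportedContinuousMap.smul_apply, smul_eq_mul, mul_left_comm (f _),
    integral_const_mul]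
  positivity

theorem eqOn_zero_of_forall_admissibleTests_integral_mul_eq_zero {f : E → ℝ} (hf : Continuous f)
    {U : Set E} (hU : IsOpen U) (h : ∀ φ ∈ admissibleTests U, ∫ x in U, f x * φ x ∂μ = 0) :
    EqOn f 0 U := by
  intro x₀ hx₀
  by_contra hne
  -- test against `f x₀ * f`, which is positive at `x₀` whatever the sign of `f x₀`
  obtain ⟨φ, hφ, hpos⟩ := exists_mem_admissibleTests_integral_mul_pos μ
    (f := fun x => f x₀ * f x) (continuous_const.mul hf) hU hx₀ (mul_self_pos.mpr hne)
  simp only [mul_assoc, integral_const_mul, h φ hφ, mul_zero] at hpos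
  exact lt_irrefl 0 hpos

end TestFunctions

section Pairing

variable {X : Type*} [TopologicalSpace X] [MeasurableSpace X] [OpensMeasurableSpace X]
  (μ : Measure X) [IsFiniteMeasureOnCompacts μ] (T : Set C_c(X, ℝ))

theorem ContinuousMap.integrable_mul_compactlySupported (f : C(X, ℝ)) (φ : C_c(X, ℝ)) :
    Integrable (fun x => f x * φ x) μ :=
  (f.continuous.mul φ.continuous).integrable_of_hasCompactSupport φ.hasCompactSupport.mul_left

def integralPairing : C(X, ℝ) →ₗ[ℝ] T → ℝ where
  toFun f φ := ∫ x, f x * φ.1 x ∂μ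
  map_add' f g := funext fun φ => by
    simp only [ContinuousMap.add_apply, add_mul, Pi.add_apply]
    exact integral_add (f.integrable_mul_compactlySupported μ φ)
      (g.integrable_mul_compactlySupported μ φ)
  map_smul' c f := funext fun φ => by
    simp only [ContinuousMap.smul_apply, smul_eq_mul, mul_assoc, integral_const_mul,
      RingHom.id_apply, Pi.smul_apply]

theorem cauchySeq_integralPairing {g : ℕ → C(X, ℝ)}
    (h : ∀ η > (0 : ℝ), ∃ N, ∀ j ≥ N, ∀ j' ≥ N, ∀ φ ∈ T, ∫ x, (g j x - g j' x) * φ x ∂μ ≤ η) :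
    CauchySeq fun j => integralPairing μ T (g j) := by
  refine (cauchy_pi_iff' _).mpr fun φ => ?_
  rw [map_map, ← CauchySeq, Metric.cauchySeq_iff]
  intro ε hε
  obtain ⟨N, hN⟩ := h (ε / 2) (half_pos hε)
  have hdiff : ∀ j j', integralPairing μ T (g j) φ - integralPairing μ T (g j') φ =
      ∫ x, (g j x - g j' x) * φ.1 x ∂μ := fun j j' => by
    simp only [integralPairing, LinearMap.coe_mk, AddHom.coe_mk, sub_mul]
    exact (integral_sub ((g j).integrable_mul_compactlySupported μ φ)
      ((g j').integrable_mul_compactlySupported μ φ)).symm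
  refine ⟨N, fun j hj j' hj' => ?_⟩
  rw [Function.comp_apply, Function.comp_apply, Real.dist_eq, abs_sub_lt_iff, hdiff, hdiff]
  exact ⟨(hN j hj j' hj' φ φ.2).trans_lt (half_lt_self hε),
    (hN j' hj' j hj φ φ.2).trans_lt (half_lt_self hε)⟩

end Pairing

section Polynomials

open MvPolynomial

variable {n d : ℕ}

def evalEuclidean (n : ℕ) : MvPolynomial (Fin n) ℝ →ₐ[ℝ] C(En n, ℝ) :=
  aeval fun i => (EuclideanSpace.proj (𝕜 := ℝ) i : En n →L[ℝ] ℝ)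

theorem evalEuclidean_apply (p : MvPolynomial (Fin n) ℝ) (x : En n) :
    evalEuclidean n p x = eval (fun i => x i) p := by
  induction p using MvPolynomial.induction_on <;> simp_all [evalEuclidean]

def polyDegLt (n d : ℕ) : Submodule ℝ C(En n, ℝ) :=
  (restrictSupport ℝ {m | (m.sum fun _ e => e) < d}).map (evalEuclidean n).toLinearMap

instance : FiniteDimensional ℝ (polyDegLt n d) :=
  haveI := Module.Finite.map (restrictTotalDegree (Fin n) ℝ d) (evalEuclidean n).toLinearMap
  Submodule.finiteDimensional_of_le (Submodule.map_mono (restrictSupport_mono ℝ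
    fun _ hm => Nat.le_of_lt hm) : polyDegLt n d ≤ (restrictTotalDegree (Fin n) ℝ d).map _)

theorem mem_polyDegLt {f : C(En n, ℝ)} : f ∈ polyDegLt n d ↔ IsPolyDegLt n d f := by
  constructor
  · rintro ⟨p, hp, rfl⟩
    exact ⟨p, fun m hm => hp hm, evalEuclidean_apply p⟩
  · rintro ⟨p, hp, hf⟩
    exact ⟨p, fun m hm => hp m hm,
      ContinuousMap.ext fun x => (evalEuclidean_apply p x).trans (hf x).symm⟩

theorem IsPolyDegLt.continuous {f : En n → ℝ} (hf : IsPolyDegLt n d f) : Continuous f := by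
  obtain ⟨p, -, hf⟩ := hf
  rw [funext hf]
  exact (MvPolynomial.continuous_eval p).comp (PiLp.continuous_ofLp 2 _)

theorem eq_zero_of_mem_polyDegLt_of_eqOn_zero {U : Set (En n)} (hU : IsOpen U) (hne : U.Nonempty)
    {f : C(En n, ℝ)} (hf : f ∈ polyDegLt n d) (hfU : EqOn f 0 U) : f = 0 := by
  obtain ⟨p, -, rfl⟩ := hf
  have hana : AnalyticOnNhd ℝ (evalEuclidean n p) univ := by
    rw [show ⇑(evalEuclidean n p) = fun x => eval (fun i => x i) p from
      funext (evalEuclidean_apply p)]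
    simpa only [PiLp.proj_apply] using
      AnalyticOnNhd.eval_continuousLinearMap' (fun i => EuclideanSpace.proj (𝕜 := ℝ) i) p
  obtain ⟨x₀, hx₀⟩ := hne
  have hev : ⇑(evalEuclidean n p) =ᶠ[𝓝 x₀] 0 := eventually_of_mem (hU.mem_nhds hx₀) hfU
  ext x
  exact hana.eqOn_zero_of_preconnected_of_eventuallyEq_zero isPreconnected_univ (mem_univ x₀)
    hev (mem_univ x)

theorem injective_integralPairing_polyDegLt {U : Set (En n)} (hU : IsOpen U) (hne : U.Nonempty) :
    Function.Injective
      ((integralPairing (volume.restrict U) (admissibleTests U)).domRestrict (polyDegLt n d)) := by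
  refine (injective_iff_map_eq_zero _).mpr fun f hf => Subtype.ext ?_
  refine eq_zero_of_mem_polyDegLt_of_eqOn_zero hU hne f.2
    (eqOn_zero_of_forall_admissibleTests_integral_mul_eq_zero volume f.1.continuous hU ?_)
  exact fun φ hφ => congrFun hf ⟨φ, hφ⟩

end Polynomials

theorem poly_weak_cauchy_unif_general
    (n : ℕ) (d : ℕ) (U : Set (En n))
    (hUne : U.Nonempty) (hUopen : IsOpen U) (hUbdd : Bornology.IsBounded U)
    (P : ℕ → En n → ℝ) (hP : ∀ j, IsPolyDegLt n d (P j))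
    (hcauchy : ∀ η > (0 : ℝ), ∃ N : ℕ, ∀ j ≥ N, ∀ j' ≥ N,
      ∀ φ : En n → ℝ, ContDiff ℝ 2 φ → HasCompactSupport φ → tsupport φ ⊆ U →
        (⨆ x : En n, |φ x|) + (⨆ x : En n, ‖fderiv ℝ φ x‖) +
            (⨆ x : En n, ‖iteratedFDeriv ℝ 2 φ x‖) ≤ 1 →
        (∫ x in U, (P j x - P j' x) * φ x) ≤ η) :
    ∃ Q : En n → ℝ, IsPolyDegLt n d Q ∧
      TendstoUniformlyOn (fun j => P j) Q atTop U := by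
  let p : ℕ → polyDegLt n d := fun j => ⟨⟨P j, (hP j).continuous⟩, mem_polyDegLt.mpr (hP j)⟩
  set J := (integralPairing (volume.restrict U) (admissibleTests U)).domRestrict (polyDegLt n d)
  have hweak : CauchySeq (J ∘ p) := by
    refine cauchySeq_integralPairing (g := fun j => (p j).1) _ _ fun η hη => ?_
    obtain ⟨N, hN⟩ := hcauchy η hη
    exact ⟨N, fun j hj j' hj' φ ⟨hφ, hφU, hφ1⟩ =>
      hN j hj j' hj' φ hφ φ.hasCompactSupport hφU hφ1⟩
  obtain ⟨Q, hQ⟩ := LinearMap.exists_tendsto_of_cauchySeq_comp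
    (injective_integralPairing_polyDegLt hUopen hUne) hweak
  refine ⟨Q.1, mem_polyDegLt.mp Q.2, ?_⟩
  have hQ' : Tendsto (fun j => (p j : C(En n, ℝ))) atTop (𝓝 Q.1) :=
    (continuous_subtype_val.tendsto Q).comp hQ
  exact (ContinuousMap.tendsto_iff_forall_isCompact_tendstoUniformlyOn.mp hQ' _
    hUbdd.isCompact_closure).mono subset_closure

/-- Weak-norm Cauchy sequences of polynomials converge uniformly.
The Cauchy condition `‖P⁽ʲ⁾ − P⁽ʲ'⁾‖_⋆ ≤ η` is stated in its unfolded form: the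
integral against every admissible test function `φ` (of class `C²`, compactly
supported in `U`, with `‖φ‖_{C²(ℝⁿ)} ≤ 1`) is at most `η`. -/
theorem poly_weak_cauchy_unif
    (n : ℕ) (hn : 1 ≤ n) (d : ℕ) (U : Set (En n))
    (hUne : U.Nonempty) (hUopen : IsOpen U) (hUbdd : Bornology.IsBounded U)
    (P : ℕ → En n → ℝ) (hP : ∀ j, IsPolyDegLt n d (P j))
    (hcauchy : ∀ η > (0 : ℝ), ∃ N : ℕ, ∀ j ≥ N, ∀ j' ≥ N,
      ∀ φ : En n → ℝ, ContDiff ℝ 2 φ → HasCompactSupport φ → tsupport φ ⊆ U →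
        (⨆ x : En n, |φ x|) + (⨆ x : En n, ‖fderiv ℝ φ x‖) +
            (⨆ x : En n, ‖iteratedFDeriv ℝ 2 φ x‖) ≤ 1 →
        (∫ x in U, (P j x - P j' x) * φ x) ≤ η) :
    ∃ Q : En n → ℝ, IsPolyDegLt n d Q ∧
      TendstoUniformlyOn (fun j => P j) Q atTop U :=
  poly_weak_cauchy_unif_general n d U hUne hUopen hUbdd P hP hcauchy
end
end

section
/- (Reabsorbing lower order norms into the Hölder seminorm modulo polynomials.) Let n ≥ 1, k ∈ ℕ with k ≥ 1, and let γ = m + θ with m ∈ ℕ, θ ∈ (0,1) and m ≤ k − 1. Then there exists a constant C > 0, depending only on n, γ and k, such that for every f : B_1 → ℝ which is m times continuously differentiable with ‖f‖_{C^γ(B_1)} < ∞, one has inf_P ( sup_{B_1} |f − P| + [f − P]_{C^γ(B_1)} ) ≤ C · inf_P [f − P]_{C^γ(B_1)}, where both infima are taken over all polynomials P of degree at most k−1. -/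
open MeasureTheory Metric Set Filter
open scoped ENNReal

noncomputable section

/-! Given `P`, let `T` be the Taylor polynomial of degree `m` at `0` of `g = f - P`. Since
`D^m T` is constant, `[g - T]_γ = [g]_γ`. The derivatives of `g - T` of order `< m` vanish at `0`,
and `‖D^m (g - T) y - D^m (g - T) 0‖ = ‖D^m g y - D^m g 0‖ ≤ [g]_γ |y|^θ ≤ [g]_γ` on `B_1`, so
integrating `m` times along the segment from `0` to `x` gives `sup_{B_1} |g - T| ≤ [g]_γ`.
Hence `P + T` witnesses the inequality with `C = 2`. -/

open scoped Nat

theorem ContinuousMultilinearMap.norm_eq_norm_apply_one {𝕜 ι G : Type*} [NontriviallyNormedField 𝕜]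
    [Fintype ι] [NormedAddCommGroup G] [NormedSpace 𝕜 G]
    (B : ContinuousMultilinearMap 𝕜 (fun _ : ι => 𝕜) G) : ‖B‖ = ‖B fun _ => 1‖ := by
  conv_lhs => rw [← B.mkPiRing_apply_one_eq_self]
  exact norm_mkPiRing _

section Calculus

variable {E F : Type*} [NormedAddCommGroup E] [NormedSpace ℝ E] [NormedAddCommGroup F]
  [NormedSpace ℝ F]

theorem norm_iteratedFDerivWithin_comp_toSpanSingleton {f : E → F} {s : Set E} {N : ℕ}
    (hs : IsOpen s) (hf : ContDiffOn ℝ N f s) (x : E) {j : ℕ} (hj : j ≤ N) {t : ℝ}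
    (ht : t • x ∈ s) :
    ‖iteratedFDerivWithin ℝ j (f ∘ ContinuousLinearMap.toSpanSingleton ℝ x)
        (ContinuousLinearMap.toSpanSingleton ℝ x ⁻¹' s) t‖ =
      ‖iteratedFDerivWithin ℝ j f s (t • x) fun _ => x‖ := by
  set L := ContinuousLinearMap.toSpanSingleton ℝ x
  rw [L.iteratedFDerivWithin_comp_right hf hs.uniqueDiffOn
    (hs.preimage L.continuous).uniqueDiffOn ht (by exact_mod_cast hj),
    ContinuousMultilinearMap.norm_eq_norm_apply_one]
  simp [L]

theorem Convex.norm_le_of_iteratedFDerivWithin_eq_zero {s : Set E} (hs : Convex ℝ s)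
    (hsu : UniqueDiffOn ℝ s) (h0 : (0 : E) ∈ s) {f : E → F} {m : ℕ} (hf : ContDiffOn ℝ m f s)
    (hvan : ∀ j < m, iteratedFDerivWithin ℝ j f s 0 = 0) {A : ℝ}
    (hA : ∀ y ∈ s ∩ closedBall 0 1, ‖iteratedFDerivWithin ℝ m f s y‖ ≤ A) :
    ∀ y ∈ s ∩ closedBall 0 1, ‖f y‖ ≤ A := by
  have h0' : (0 : E) ∈ s ∩ closedBall 0 1 := ⟨h0, mem_closedBall_self zero_le_one⟩
  have hA0 : 0 ≤ A := (norm_nonneg _).trans (hA 0 h0')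
  suffices ∀ i ≤ m, ∀ y ∈ s ∩ closedBall 0 1, ‖iteratedFDerivWithin ℝ (m - i) f s y‖ ≤ A by
    intro y hy
    have := this m le_rfl y hy
    rwa [Nat.sub_self, norm_iteratedFDerivWithin_zero] at this
  intro i
  induction i with
  | zero => simpa using hA
  | succ i ih =>
    intro hi y hy
    have hderiv : ∀ z ∈ s ∩ closedBall 0 1, HasFDerivWithinAt
        (iteratedFDerivWithin ℝ (m - (i + 1)) f s)
        (fderivWithin ℝ (iteratedFDerivWithin ℝ (m - (i + 1)) f s) s z) (s ∩ closedBall 0 1) z :=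
      fun z hz => ((hf.differentiableOn_iteratedFDerivWithin (by norm_cast; omega) hsu z
        hz.1).hasFDerivWithinAt).mono inter_subset_left
    have hbound : ∀ z ∈ s ∩ closedBall 0 1,
        ‖fderivWithin ℝ (iteratedFDerivWithin ℝ (m - (i + 1)) f s) s z‖ ≤ A := by
      intro z hz
      rw [norm_fderivWithin_iteratedFDerivWithin, show m - (i + 1) + 1 = m - i by omega]
      exact ih (by omega) z hz
    have hmvt := (hs.inter (convex_closedBall 0 1)).norm_image_sub_le_of_norm_hasFDerivWithin_le
      hderiv hbound h0' hy
    rw [hvan _ (by omega), sub_zero, sub_zero] at hmvt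
    exact hmvt.trans (mul_le_of_le_one_right hA0 (mem_closedBall_zero_iff.mp hy.2))

theorem HasFiniteFPowerSeriesOnBall.iteratedFDeriv_eq {f : E → F}
    {p : FormalMultilinearSeries ℝ E F} {x : E} {k : ℕ}
    (h : HasFiniteFPowerSeriesOnBall f p x (k + 1) ⊤) (y z : E) :
    iteratedFDeriv ℝ k f y = iteratedFDeriv ℝ k f z := by
  have hser := (hasFPowerSeriesWithinOnBall_univ.mpr h.toHasFPowerSeriesOnBall)
    |>.iteratedFDerivWithin (fun w _ => (h.cpolynomialOn w (by simp)).analyticAt.analyticWithinAt)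
      k uniqueDiffOn_univ (mem_univ x)
  have hfin : HasFiniteFPowerSeriesOnBall (iteratedFDeriv ℝ k f) (p.iteratedFDerivSeries k) x 1 ⊤ :=
    ⟨by simpa [iteratedFDerivWithin_univ] using hasFPowerSeriesWithinOnBall_univ.mp hser,
      fun j hj => p.iteratedFDerivSeries_eq_zero (h.finite _ (by omega))⟩
  rw [hfin.eq_const_of_bound_one y (by simp), hfin.eq_const_of_bound_one z (by simp)]

theorem IsOpen.iteratedFDerivWithin_sub_of_contDiff {s : Set E} (hs : IsOpen s)
    {g h : E → F} {j : ℕ} (hg : ContDiffOn ℝ j g s) (hh : ContDiff ℝ j h) {y : E} (hy : y ∈ s) :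
    iteratedFDerivWithin ℝ j (fun x => g x - h x) s y =
      iteratedFDerivWithin ℝ j g s y - iteratedFDeriv ℝ j h y := by
  rw [fun_iteratedFDerivWithin_sub_apply (hg y hy) hh.contDiffWithinAt hs.uniqueDiffOn hy,
    iteratedFDerivWithin_of_isOpen (f := h) j hs hy]

section Taylor

/-- Its sum is the Taylor polynomial of degree `m` of `g` at `0`. -/
def truncTaylorSeries (m : ℕ) (g : E → F) (s : Set E) : FormalMultilinearSeries ℝ E F :=
  fun j => if j ≤ m then (j ! : ℝ)⁻¹ • iteratedFDerivWithin ℝ j g s 0 else 0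

variable (m : ℕ) (g : E → F) (s : Set E)

theorem hasFiniteFPowerSeriesOnBall_truncTaylorSeries :
    HasFiniteFPowerSeriesOnBall (truncTaylorSeries m g s).sum (truncTaylorSeries m g s) 0
      (m + 1) ⊤ :=
  FormalMultilinearSeries.hasFiniteFPowerSeriesOnBall_of_finite _
    fun j hj => by simp [truncTaylorSeries, show ¬j ≤ m by omega]

theorem contDiff_truncTaylorSeries_sum {N : WithTop ℕ∞} :
    ContDiff ℝ N (truncTaylorSeries m g s).sum := by
  rw [← contDiffOn_univ]
  exact ((hasFiniteFPowerSeriesOnBall_truncTaylorSeries m g s).cpolynomialOn.mono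
    (by simp)).contDiffOn

theorem iteratedFDeriv_truncTaylorSeries_sum_eq (y z : E) :
    iteratedFDeriv ℝ m (truncTaylorSeries m g s).sum y =
      iteratedFDeriv ℝ m (truncTaylorSeries m g s).sum z :=
  (hasFiniteFPowerSeriesOnBall_truncTaylorSeries m g s).iteratedFDeriv_eq y z

theorem iteratedFDeriv_truncTaylorSeries_sum_zero_apply_diag [CompleteSpace F] {j : ℕ}
    (hj : j ≤ m) (y : E) :
    iteratedFDeriv ℝ j (truncTaylorSeries m g s).sum 0 (fun _ => y) =
      iteratedFDerivWithin ℝ j g s 0 (fun _ => y) := by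
  rw [← (hasFiniteFPowerSeriesOnBall_truncTaylorSeries m g s).toHasFPowerSeriesOnBall
    |>.factorial_smul]
  simp [truncTaylorSeries, hj, ← Nat.cast_smul_eq_nsmul ℝ, smul_smul, j.factorial_ne_zero]

end Taylor

theorem Convex.norm_le_of_iteratedFDerivWithin_apply_diag_eq_zero {s : Set E} (hs : Convex ℝ s)
    (hso : IsOpen s) (h0 : (0 : E) ∈ s) {f : E → F} {m : ℕ} (hf : ContDiffOn ℝ m f s) {x : E}
    (hx : x ∈ s) (hvan : ∀ j < m, iteratedFDerivWithin ℝ j f s 0 (fun _ => x) = 0) {A : ℝ}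
    (hA : ∀ y ∈ s, ‖iteratedFDerivWithin ℝ m f s y (fun _ => x)‖ ≤ A) :
    ‖f x‖ ≤ A := by
  set L := ContinuousLinearMap.toSpanSingleton ℝ x
  have hconv : Convex ℝ (L ⁻¹' s) := hs.linear_preimage L.toLinearMap
  have hline := hconv.norm_le_of_iteratedFDerivWithin_eq_zero
    (hso.preimage L.continuous).uniqueDiffOn (by simpa [L] using h0) (hf.comp_continuousLinearMap L)
    (fun j hj => norm_eq_zero.mp (by
      rw [norm_iteratedFDerivWithin_comp_toSpanSingleton hso hf x hj.le (t := 0) (by simpa),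
        zero_smul, hvan j hj, norm_zero]))
    (fun t ht => by
      rw [norm_iteratedFDerivWithin_comp_toSpanSingleton hso hf x le_rfl (t := t) ht.1]
      exact hA _ ht.1) 1 ⟨by simpa [L] using hx, by simp⟩
  simpa [L] using hline

theorem norm_sub_truncTaylorSeries_sum_le [CompleteSpace F] {m : ℕ} {g : E → F}
    (hg : ContDiffOn ℝ m g (ball 0 1)) {A : ℝ}
    (hA : ∀ z ∈ ball (0 : E) 1, ‖iteratedFDerivWithin ℝ m g (ball 0 1) z -
      iteratedFDerivWithin ℝ m g (ball 0 1) 0‖ ≤ A)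
    {x : E} (hx : x ∈ ball (0 : E) 1) :
    ‖g x - (truncTaylorSeries m g (ball 0 1)).sum x‖ ≤ A := by
  set Ω := ball (0 : E) 1
  set T := (truncTaylorSeries m g Ω).sum
  set D : E → F := fun y => g y - T y
  have h0 : (0 : E) ∈ Ω := mem_ball_self one_pos
  have hsplit : ∀ j ≤ m, ∀ y ∈ Ω, iteratedFDerivWithin ℝ j D Ω y =
      iteratedFDerivWithin ℝ j g Ω y - iteratedFDeriv ℝ j T y := fun j hj y hy =>
    isOpen_ball.iteratedFDerivWithin_sub_of_contDiff (hg.of_le (by exact_mod_cast hj))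
      (contDiff_truncTaylorSeries_sum m g Ω) hy
  have hdiag : ∀ j ≤ m, iteratedFDerivWithin ℝ j D Ω 0 (fun _ => x) = 0 := fun j hj => by
    rw [hsplit j hj 0 h0, sub_apply,
      iteratedFDeriv_truncTaylorSeries_sum_zero_apply_diag m g Ω hj, sub_self]
  -- `T` matches the derivatives of `g` at `0` only on the diagonal, hence the passage to the
  -- line through `x`, where a multilinear map is determined by its value at `(1, …, 1)`.
  refine (convex_ball 0 1).norm_le_of_iteratedFDerivWithin_apply_diag_eq_zero isOpen_ball h0
    (hg.sub (contDiff_truncTaylorSeries_sum m g Ω).contDiffOn) hx (fun j hj => hdiag j hj.le)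
    fun y hy => ?_
  calc ‖iteratedFDerivWithin ℝ m D Ω y (fun _ => x)‖
      = ‖(iteratedFDerivWithin ℝ m D Ω y - iteratedFDerivWithin ℝ m D Ω 0) (fun _ => x)‖ := by
        rw [sub_apply, hdiag m le_rfl, sub_zero]
    _ ≤ ‖iteratedFDerivWithin ℝ m D Ω y - iteratedFDerivWithin ℝ m D Ω 0‖ * ‖x‖ ^ m := by
        simpa using (iteratedFDerivWithin ℝ m D Ω y - iteratedFDerivWithin ℝ m D Ω 0).le_opNorm
          fun _ => x
    _ = ‖iteratedFDerivWithin ℝ m g Ω y - iteratedFDerivWithin ℝ m g Ω 0‖ * ‖x‖ ^ m := by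
        rw [hsplit m le_rfl y hy, hsplit m le_rfl 0 h0,
          iteratedFDeriv_truncTaylorSeries_sum_eq m g Ω y 0, sub_sub_sub_cancel_right]
    _ ≤ A * 1 := mul_le_mul (hA y hy) (pow_le_one₀ (norm_nonneg x) (mem_ball_zero_iff.mp hx).le)
        (by positivity) ((norm_nonneg _).trans (hA 0 h0))
    _ = A := mul_one A

end Calculus

section Polynomial

variable {n k : ℕ}

theorem IsPolyDegLt.contDiff {P : En n → ℝ} (hP : IsPolyDegLt n k P) {N : WithTop ℕ∞} :
    ContDiff ℝ N P := by
  obtain ⟨p, -, hp⟩ := hP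
  rw [funext hp]
  exact (AnalyticOnNhd.eval_continuousLinearMap
    (EuclideanSpace.equiv (Fin n) ℝ).toContinuousLinearMap p).contDiff

theorem IsPolyDegLt.mono {k' : ℕ} (hkk' : k ≤ k') {P : En n → ℝ} (hP : IsPolyDegLt n k P) :
    IsPolyDegLt n k' P := by
  obtain ⟨p, hdeg, hp⟩ := hP
  exact ⟨p, fun d hd => (hdeg d hd).trans_le hkk', hp⟩

theorem IsPolyDegLt.add {P Q : En n → ℝ} (hP : IsPolyDegLt n k P) (hQ : IsPolyDegLt n k Q) :
    IsPolyDegLt n k fun x => P x + Q x := by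
  obtain ⟨p, hpdeg, hp⟩ := hP
  obtain ⟨q, hqdeg, hq⟩ := hQ
  refine ⟨p + q, fun d hd => ?_, fun x => by simp [hp x, hq x]⟩
  rcases Finset.mem_union.mp (MvPolynomial.support_add hd) with h | h
  · exact hpdeg d h
  · exact hqdeg d h

theorem ContinuousMultilinearMap.exists_totalDegree_le_apply_diag {j : ℕ}
    (B : ContinuousMultilinearMap ℝ (fun _ : Fin j => En n) ℝ) :
    ∃ p : MvPolynomial (Fin n) ℝ, p.totalDegree ≤ j ∧
      ∀ x : En n, B (fun _ => x) = MvPolynomial.eval (fun i => x i) p := by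
  classical
  let e := EuclideanSpace.basisFun (Fin n) ℝ
  refine ⟨∑ d : Fin j → Fin n, MvPolynomial.C (B (e ∘ d)) * ∏ l, MvPolynomial.X (d l),
    ?_, fun x => ?_⟩
  · refine (MvPolynomial.totalDegree_finsetSum _ _).trans (Finset.sup_le fun d _ => ?_)
    refine (MvPolynomial.totalDegree_mul _ _).trans ?_
    rw [MvPolynomial.totalDegree_C, zero_add]
    refine (MvPolynomial.totalDegree_finsetProd _ _).trans ?_
    simp
  · conv_lhs => rw [← e.sum_repr x, B.map_sum]
    simp [B.map_smul_univ, mul_comm, e, Function.comp_def]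

theorem isPolyDegLt_sum_apply_diag (q : FormalMultilinearSeries ℝ (En n) ℝ) (N : ℕ) :
    IsPolyDegLt n N fun x => ∑ j ∈ Finset.range N, q j (fun _ => x) := by
  choose p hpdeg hp using fun j => (q j).exists_totalDegree_le_apply_diag
  refine ⟨∑ j ∈ Finset.range N, p j, fun d hd => ?_, fun x => by simp [hp]⟩
  obtain ⟨j, hj, hdj⟩ := Finset.mem_biUnion.mp (MvPolynomial.support_sum hd)
  exact ((MvPolynomial.le_totalDegree hdj).trans (hpdeg j)).trans_lt (Finset.mem_range.mp hj)

theorem isPolyDegLt_truncTaylorSeries_sum (m : ℕ) (g : En n → ℝ) (s : Set (En n)) :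
    IsPolyDegLt n (m + 1) (truncTaylorSeries m g s).sum := by
  convert isPolyDegLt_sum_apply_diag (truncTaylorSeries m g s) (m + 1) using 1
  ext x
  simpa [FormalMultilinearSeries.partialSum] using
    (hasFiniteFPowerSeriesOnBall_truncTaylorSeries m g s).eq_partialSum' x (by simp) (m + 1) le_rfl

end Polynomial

section Holder

variable {n : ℕ} {γ : ℝ} {Ω : Set (En n)}

theorem holderSemi_congr {f g : En n → ℝ}
    (h : ∀ x ∈ Ω, ∀ y ∈ Ω, iteratedFDerivWithin ℝ ⌊γ⌋₊ f Ω x - iteratedFDerivWithin ℝ ⌊γ⌋₊ f Ω y =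
      iteratedFDerivWithin ℝ ⌊γ⌋₊ g Ω x - iteratedFDerivWithin ℝ ⌊γ⌋₊ g Ω y) :
    holderSemi n γ Ω f = holderSemi n γ Ω g := by
  simp only [holderSemi]
  exact iSup_congr fun x => iSup_congr fun hx => iSup_congr fun y => iSup_congr fun hy => by
    rw [h x hx y hy]

theorem norm_sub_le_of_holderSemi_ne_top {f : En n → ℝ} (hf : holderSemi n γ Ω f ≠ ⊤)
    {x y : En n} (hx : x ∈ Ω) (hy : y ∈ Ω) :
    ‖iteratedFDerivWithin ℝ ⌊γ⌋₊ f Ω x - iteratedFDerivWithin ℝ ⌊γ⌋₊ f Ω y‖ ≤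
      (holderSemi n γ Ω f).toReal * ‖x - y‖ ^ (γ - ⌊γ⌋₊) := by
  rcases eq_or_ne x y with rfl | hxy
  · simp only [sub_self, norm_zero]
    positivity
  have hpos : 0 < ‖x - y‖ ^ (γ - ⌊γ⌋₊) :=
    Real.rpow_pos_of_pos (norm_pos_iff.mpr (sub_ne_zero.mpr hxy)) _
  rw [← div_le_iff₀ hpos, ← ENNReal.ofReal_le_iff_le_toReal hf]
  exact le_iSup₂_of_le x hx (le_iSup₂_of_le y hy (le_iSup_of_le hxy le_rfl))

theorem exists_isPolyDegLt_sup_le_holderSemi (hγ : 0 ≤ γ) {g : En n → ℝ}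
    (hg : ContDiffOn ℝ ⌊γ⌋₊ g (ball 0 1)) :
    ∃ T, IsPolyDegLt n (⌊γ⌋₊ + 1) T ∧
      (⨆ x ∈ ball (0 : En n) 1, ENNReal.ofReal |g x - T x|) ≤ holderSemi n γ (ball 0 1) g ∧
      holderSemi n γ (ball 0 1) (fun x => g x - T x) = holderSemi n γ (ball 0 1) g := by
  set Ω := ball (0 : En n) 1
  set T := (truncTaylorSeries ⌊γ⌋₊ g Ω).sum
  have hT : ContDiff ℝ ⌊γ⌋₊ T := contDiff_truncTaylorSeries_sum ⌊γ⌋₊ g Ω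
  refine ⟨T, isPolyDegLt_truncTaylorSeries_sum ⌊γ⌋₊ g Ω, ?_, holderSemi_congr fun x hx y hy => ?_⟩
  · set S := holderSemi n γ Ω g
    rcases eq_or_ne S ⊤ with hS | hS
    · simp [hS]
    refine iSup₂_le fun x hx => ?_
    rw [← ENNReal.ofReal_toReal hS, ← Real.norm_eq_abs]
    refine ENNReal.ofReal_le_ofReal (norm_sub_truncTaylorSeries_sum_le hg (fun z hz => ?_) hx)
    calc _ ≤ S.toReal * ‖z - 0‖ ^ (γ - ⌊γ⌋₊) :=
          norm_sub_le_of_holderSemi_ne_top hS hz (mem_ball_self one_pos)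
      _ ≤ S.toReal * 1 := by
          gcongr
          exact Real.rpow_le_one (norm_nonneg _) (by simpa using (mem_ball_zero_iff.mp hz).le)
            (sub_nonneg.mpr (Nat.floor_le hγ))
      _ = S.toReal := mul_one _
  · rw [isOpen_ball.iteratedFDerivWithin_sub_of_contDiff hg hT hx,
      isOpen_ball.iteratedFDerivWithin_sub_of_contDiff hg hT hy,
      iteratedFDeriv_truncTaylorSeries_sum_eq ⌊γ⌋₊ g Ω x y, sub_sub_sub_cancel_right]

end Holder

theorem reabsorb_lower_order_general
    (n : ℕ) (k : ℕ) (hk : 1 ≤ k) (m : ℕ) (θ : ℝ)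
    (hθ : θ ∈ Ioo (0 : ℝ) 1) (hmk : m ≤ k - 1) :
    ∃ C : ℝ, 0 < C ∧
      ∀ f : En n → ℝ,
        ContDiffOn ℝ m f (ball (0 : En n) 1) →
        cHolderNorm n ((m : ℝ) + θ) (ball (0 : En n) 1) f < ⊤ →
        (⨅ (P : En n → ℝ) (_ : IsPolyDegLt n k P),
            ((⨆ x ∈ ball (0 : En n) 1, ENNReal.ofReal |f x - P x|) +
              holderSemi n ((m : ℝ) + θ) (ball (0 : En n) 1) (fun x => f x - P x))) ≤
          ENNReal.ofReal C *
            ⨅ (P : En n → ℝ) (_ : IsPolyDegLt n k P),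
              holderSemi n ((m : ℝ) + θ) (ball (0 : En n) 1) (fun x => f x - P x) := by
  have hfloor : ⌊(m : ℝ) + θ⌋₊ = m := by
    rw [add_comm, Nat.floor_add_natCast hθ.1.le, Nat.floor_eq_zero.mpr hθ.2, zero_add]
  refine ⟨2, two_pos, fun f hf _ => ?_⟩
  have hbound : ∀ P, IsPolyDegLt n k P →
      (⨅ (Q : En n → ℝ) (_ : IsPolyDegLt n k Q),
        ((⨆ x ∈ ball (0 : En n) 1, ENNReal.ofReal |f x - Q x|) +
          holderSemi n ((m : ℝ) + θ) (ball (0 : En n) 1) (fun x => f x - Q x))) ≤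
        2 * holderSemi n ((m : ℝ) + θ) (ball (0 : En n) 1) (fun x => f x - P x) := by
    intro P hP
    obtain ⟨T, hT, hsup, hsemi⟩ := exists_isPolyDegLt_sup_le_holderSemi (by linarith [hθ.1])
      (hfloor ▸ hf.sub hP.contDiff.contDiffOn)
    refine (iInf₂_le (fun x => P x + T x) (hP.add (hT.mono (by omega)))).trans ?_
    simp only [← sub_sub, two_mul]
    exact add_le_add hsup hsemi.le
  rw [ENNReal.ofReal_ofNat]
  simp_rw [ENNReal.mul_iInf_of_ne two_ne_zero ENNReal.ofNat_ne_top]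
  exact le_iInf₂ hbound

/-- Reabsorbing lower order norms into the Hölder seminorm
modulo polynomials. -/
theorem reabsorb_lower_order
    (n : ℕ) (hn : 1 ≤ n) (k : ℕ) (hk : 1 ≤ k) (m : ℕ) (θ : ℝ)
    (hθ : θ ∈ Ioo (0 : ℝ) 1) (hmk : m ≤ k - 1) :
    ∃ C : ℝ, 0 < C ∧
      ∀ f : En n → ℝ,
        ContDiffOn ℝ m f (ball (0 : En n) 1) →
        cHolderNorm n ((m : ℝ) + θ) (ball (0 : En n) 1) f < ⊤ →
        (⨅ (P : En n → ℝ) (_ : IsPolyDegLt n k P),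
            ((⨆ x ∈ ball (0 : En n) 1, ENNReal.ofReal |f x - P x|) +
              holderSemi n ((m : ℝ) + θ) (ball (0 : En n) 1) (fun x => f x - P x))) ≤
          ENNReal.ofReal C *
            ⨅ (P : En n → ℝ) (_ : IsPolyDegLt n k P),
              holderSemi n ((m : ℝ) + θ) (ball (0 : En n) 1) (fun x => f x - P x) :=
  reabsorb_lower_order_general n k hk m θ hθ hmk
end
end
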